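/- arXiv:2411.06092 — 2 statements merged into one kernel-verified Lean document; each statement's English description precedes it below -/
import Mathlib

section
/- Let $\kappa_0>2$, $0<\epsilon\le\alpha<1$, $0<\kappa<\kappa_0$, and set $a=8(\kappa+1)/\alpha$. For $0\le\rho<r$ define $\Phi(r)=e^{ar^{\alpha}}/(r^{2\kappa+2}-\rho^{2\kappa+2})$. Then there exists $r_0>0$ depending only on $\epsilon$ such that $\Phi'(r)\le 0$ for all $0\le\rho<r<r_0$ with $\rho/r\le 1/\sqrt{2}$. -/
/-!
Differentiating, `Φ'(r) ≤ 0` amounts to `a α r^{α-1} (r^β - ρ^β) ≤ β r^{β-1}` with `β = 2κ + 2`.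
Dropping `ρ^β ≥ 0`, it suffices that `a α r^α ≤ β`; for `a = 8(κ+1)/α` this reads `r^α ≤ 1/4`,
which holds for all `α ≥ ε` as soon as `r ≤ min 1 (1/4)^{1/ε}`.
-/

/-- `Φ(r) = e^{a r^α} / (r^{2κ+2} - ρ^{2κ+2})`. -/
noncomputable def Phi (a α κ ρ : ℝ) (r : ℝ) : ℝ :=
  Real.exp (a * r ^ α) / (r ^ (2 * κ + 2) - ρ ^ (2 * κ + 2))

open Real

lemma hasDerivAt_Phi {a α κ ρ r : ℝ} (hr : 0 < r)
    (hD : r ^ (2 * κ + 2) - ρ ^ (2 * κ + 2) ≠ 0) :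
    HasDerivAt (Phi a α κ ρ)
      ((exp (a * r ^ α) * (a * (α * r ^ (α - 1))) * (r ^ (2 * κ + 2) - ρ ^ (2 * κ + 2))
        - exp (a * r ^ α) * ((2 * κ + 2) * r ^ (2 * κ + 2 - 1)))
        / (r ^ (2 * κ + 2) - ρ ^ (2 * κ + 2)) ^ 2) r := by
  have hexp := ((hasDerivAt_rpow_const (p := α) (Or.inl hr.ne')).const_mul a).exp
  have hden := (hasDerivAt_rpow_const (p := 2 * κ + 2) (Or.inl hr.ne')).sub_const
    (ρ ^ (2 * κ + 2))
  exact hexp.div hden hD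

lemma deriv_Phi_nonpos {a α κ ρ r : ℝ} (haα : 0 ≤ a * α) (hκ : 0 < κ + 1) (hρ : 0 ≤ ρ)
    (hρr : ρ < r) (hr : a * α * r ^ α ≤ 2 * κ + 2) :
    deriv (Phi a α κ ρ) r ≤ 0 := by
  set β := 2 * κ + 2
  have hr0 : 0 < r := hρ.trans_lt hρr
  have hD : 0 < r ^ β - ρ ^ β := sub_pos.mpr (rpow_lt_rpow hρ hρr (by linarith))
  rw [(hasDerivAt_Phi hr0 hD.ne').deriv]
  refine div_nonpos_of_nonpos_of_nonneg ?_ (sq_nonneg _)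
  have key : a * (α * r ^ (α - 1)) * (r ^ β - ρ ^ β) ≤ β * r ^ (β - 1) := calc
    a * (α * r ^ (α - 1)) * (r ^ β - ρ ^ β) ≤ a * α * r ^ (α - 1) * r ^ β := by
      rw [← mul_assoc]
      gcongr
      exact sub_le_self _ (rpow_nonneg hρ β)
    _ = a * α * r ^ α * r ^ (β - 1) := by
      have : r ^ (α - 1) * r ^ β = r ^ α * r ^ (β - 1) := by
        rw [← rpow_add hr0, ← rpow_add hr0]
        ring_nf
      rw [mul_assoc, this]; ring
    _ ≤ β * r ^ (β - 1) := by gcongr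
  nlinarith [mul_le_mul_of_nonneg_left key (exp_pos (a * r ^ α)).le]

lemma rpow_le_of_le_rpow_inv {ε α r c : ℝ} (hε : 0 < ε) (hεα : ε ≤ α) (hr : 0 < r) (hr1 : r ≤ 1)
    (hc : 0 ≤ c) (hrc : r ≤ c ^ ε⁻¹) : r ^ α ≤ c :=
  (rpow_le_rpow_of_exponent_ge hr hr1 hεα).trans ((le_rpow_inv_iff_of_pos hr.le hc hε).mp hrc)

/-- There exists `r0 > 0` depending only on `ε` such that `Φ'(r) ≤ 0`
for all `0 ≤ ρ < r < r0` with `ρ/r ≤ 1/√2`. -/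
theorem stmt_0 (ε : ℝ) (hε : 0 < ε) :
    ∃ r0 : ℝ, 0 < r0 ∧
      ∀ κ0 κ α ρ : ℝ, 2 < κ0 → ε ≤ α → α < 1 → 0 < κ → κ < κ0 → 0 ≤ ρ →
        ∀ r : ℝ, ρ < r → r < r0 → ρ / r ≤ 1 / Real.sqrt 2 →
          deriv (Phi (8 * (κ + 1) / α) α κ ρ) r ≤ 0 := by
  refine ⟨min 1 ((1 / 4 : ℝ) ^ ε⁻¹), lt_min one_pos (by positivity), ?_⟩
  intro κ0 κ α ρ _ hεα _ hκ _ hρ r hρr hr0 _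
  have hα : 0 < α := hε.trans_le hεα
  have haα : 8 * (κ + 1) / α * α = 4 * (2 * κ + 2) := by field_simp; ring
  have hrα : r ^ α ≤ 1 / 4 :=
    rpow_le_of_le_rpow_inv hε hεα (hρ.trans_lt hρr) (hr0.trans_le (min_le_left _ _)).le
      (by norm_num) (hr0.trans_le (min_le_right _ _)).le
  refine deriv_Phi_nonpos (by rw [haα]; positivity) (by linarith) hρ hρr ?_
  rw [haα]
  nlinarith
end

section
/- Let $0<\xi<1$ and set $\eta=\xi/(e^{5/2}+\xi-1)\in(0,1)$. Let $V:(-1,0)\to[0,\infty)$ be a measurable function that is nondecreasing in $t$ and satisfies the epiperimetric-type decay $V(t/e)\le(1-\xi)V(t)$ for all $t\in(-1,0)$. Then for every $0<r<1$, $\int_{-r^2}^{0}(-t)^{3/2}\,V(t)\,dt\;\le\;\frac{(1-\eta)}{5/2}\,r^{5}\,V(-r^2)$. -/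
/-!
Split `(-r², 0)` at `-r²/e`. The substitution `t = s/e` and the decay inequality bound the
integral over `(-r²/e, 0)` by `(1 - ξ) e^{-5/2}` times the whole integral `I`, while on
`(-r², -r²/e)` the weight integrates to `(2/5) r⁵ (1 - e^{-5/2})` and `V ≤ V(-r²)`. Hence
`I ≤ (2/5) r⁵ (1 - e^{-5/2}) V(-r²) + (1 - ξ) e^{-5/2} I`, and solving for the finite number
`I` gives the claim. The bound `V ≤ V(-r²)` on `(-r², 0)`, which also makes `I` finite, comes from
`V t ≤ V(-r² e^{-n}) ≤ (1 - ξ)ⁿ V(-r²)` for `n` so large that `t ≤ -r² e^{-n}`.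
-/

open MeasureTheory Set intervalIntegral

section Decay

variable {V : ℝ → ℝ} {a c q : ℝ}

theorem div_mem_Ioo (hc : 1 ≤ c) {t : ℝ} (ht : t ∈ Ioo a 0) : t / c ∈ Ioo a 0 := by
  refine ⟨ht.1.trans_le ?_, div_neg_of_neg_of_pos ht.2 (by linarith)⟩
  rw [le_div_iff₀ (by linarith)]
  nlinarith [ht.2]

theorem le_pow_mul_of_decay (hc : 1 ≤ c) (hq : 0 ≤ q)
    (hdecay : ∀ t ∈ Ioo a 0, V (t / c) ≤ q * V t) {t : ℝ} (ht : t ∈ Ioo a 0) (n : ℕ) :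
    V (t / c ^ n) ≤ q ^ n * V t := by
  induction n with
  | zero => simp
  | succ n ih =>
    calc V (t / c ^ (n + 1)) = V (t / c ^ n / c) := by rw [pow_succ, div_div]
      _ ≤ q * V (t / c ^ n) := hdecay _ (div_mem_Ioo (one_le_pow₀ hc) ht)
      _ ≤ q * (q ^ n * V t) := mul_le_mul_of_nonneg_left ih hq
      _ = q ^ (n + 1) * V t := by ring

theorem le_of_monotoneOn_of_decay (hc : 1 < c) (hq₀ : 0 ≤ q) (hq₁ : q ≤ 1)
    (hmono : MonotoneOn V (Ioo a 0)) (hdecay : ∀ t ∈ Ioo a 0, V (t / c) ≤ q * V t)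
    {s t : ℝ} (hs : s ∈ Ioo a 0) (hVs : 0 ≤ V s) (ht : t ∈ Ioo s 0) : V t ≤ V s := by
  obtain ⟨n, hn⟩ := exists_pow_lt_of_lt_one (div_pos_of_neg_of_neg ht.2 hs.2)
    (inv_lt_one_of_one_lt₀ hc)
  have hts : t ≤ s / c ^ n := by
    rw [lt_div_iff_of_neg hs.2, inv_pow] at hn
    rw [div_eq_inv_mul]
    exact hn.le
  calc V t ≤ V (s / c ^ n) :=
        hmono ⟨hs.1.trans ht.1, ht.2⟩ (div_mem_Ioo (one_le_pow₀ hc.le) hs) hts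
    _ ≤ q ^ n * V s := le_pow_mul_of_decay hc.le hq₀ hdecay hs n
    _ ≤ V s := mul_le_of_le_one_left hVs (pow_le_one₀ hq₀ hq₁)

end Decay

section WeightedIntegral

variable {p ρ K : ℝ} {V : ℝ → ℝ}

theorem intervalIntegrable_neg_rpow (hp : -1 < p) (a b : ℝ) :
    IntervalIntegrable (fun t => (-t) ^ p) volume a b := by
  simpa using (IntervalIntegrable.iff_comp_neg (f := fun t => t ^ p)).mp
    (intervalIntegral.intervalIntegrable_rpow' (a := -a) (b := -b) hp)

theorem intervalIntegrable_neg_rpow_mul (hp : -1 < p) (hρ : 0 ≤ ρ)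
    (hV : AEStronglyMeasurable V (volume.restrict (Ioo (-ρ) 0)))
    (hVK : ∀ t ∈ Ioo (-ρ) 0, |V t| ≤ K) :
    IntervalIntegrable (fun t => (-t) ^ p * V t) volume (-ρ) 0 := by
  have hweight := intervalIntegrable_neg_rpow hp (-ρ) 0
  rw [intervalIntegrable_iff_integrableOn_Ioo_of_le (by linarith)] at hweight ⊢
  exact hweight.mul_bdd hV (ae_restrict_of_forall_mem measurableSet_Ioo hVK)

theorem integral_neg_rpow (hp : -1 < p) (a b : ℝ) :
    ∫ t in -b..-a, (-t) ^ p = (b ^ (p + 1) - a ^ (p + 1)) / (p + 1) := by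
  rw [intervalIntegral.integral_comp_neg (fun t => t ^ p), neg_neg, neg_neg]
  exact integral_rpow (Or.inl hp)

theorem integral_neg_rpow_mul_comp_div {c : ℝ} (hc : 0 < c) (hρ : 0 ≤ ρ) :
    ∫ t in -ρ..0, (-t) ^ p * V (t / c) = c ^ (p + 1) * ∫ t in -ρ / c..0, (-t) ^ p * V t := by
  have hpoint : ∀ t ∈ uIcc (-ρ) 0,
      (-t) ^ p * V (t / c) = c ^ p * ((-(t / c)) ^ p * V (t / c)) := by
    intro t ht
    rw [uIcc_of_le (by linarith)] at ht
    rw [← neg_div, Real.div_rpow (by linarith [ht.2]) hc.le]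
    field_simp
  rw [integral_congr hpoint, intervalIntegral.integral_const_mul,
    intervalIntegral.integral_comp_div (fun t => (-t) ^ p * V t) hc.ne', zero_div, smul_eq_mul,
    Real.rpow_add_one hc.ne']
  ring

theorem integral_neg_rpow_mul_le {a b : ℝ} (hp : -1 < p) (hab : a ≤ b) (hb : b ≤ 0)
    (hV : IntervalIntegrable (fun t => (-t) ^ p * V t) volume a b)
    (hVK : ∀ t ∈ Ioo a b, V t ≤ K) :
    ∫ t in a..b, (-t) ^ p * V t ≤ K * ((-a) ^ (p + 1) - (-b) ^ (p + 1)) / (p + 1) := by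
  calc ∫ t in a..b, (-t) ^ p * V t
      ≤ ∫ t in a..b, (-t) ^ p * K :=
        integral_mono_on_of_le_Ioo hab hV ((intervalIntegrable_neg_rpow hp _ _).mul_const K)
          fun t ht => mul_le_mul_of_nonneg_left (hVK t ht)
            (Real.rpow_nonneg (by linarith [ht.2]) _)
    _ = K * ((-a) ^ (p + 1) - (-b) ^ (p + 1)) / (p + 1) := by
      rw [intervalIntegral.integral_mul_const, ← neg_neg a, ← neg_neg b, integral_neg_rpow hp,
        neg_neg, neg_neg]
      ring

theorem rpow_mul_integral_neg_rpow_mul_le_of_decay (hp : -1 < p) (hρ : 0 ≤ ρ) {c q : ℝ}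
    (hc : 1 ≤ c) (hV : Measurable V) (hVK : ∀ t ∈ Ioo (-ρ) 0, |V t| ≤ K)
    (hdecay : ∀ t ∈ Ioo (-ρ) 0, V (t / c) ≤ q * V t) :
    c ^ (p + 1) * ∫ t in -ρ / c..0, (-t) ^ p * V t ≤ q * ∫ t in -ρ..0, (-t) ^ p * V t := by
  rw [← integral_neg_rpow_mul_comp_div (by linarith) hρ, ← intervalIntegral.integral_const_mul]
  have hVc : ∀ t ∈ Ioo (-ρ) 0, |V (t / c)| ≤ K := fun t ht => hVK _ (div_mem_Ioo hc ht)
  refine integral_mono_on_of_le_Ioo (by linarith) (intervalIntegrable_neg_rpow_mul hp hρ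
    (hV.comp (measurable_id.div_const c)).aestronglyMeasurable hVc)
    ((intervalIntegrable_neg_rpow_mul hp hρ hV.aestronglyMeasurable hVK).const_mul q)
    fun t ht => ?_
  calc (-t) ^ p * V (t / c) ≤ (-t) ^ p * (q * V t) :=
        mul_le_mul_of_nonneg_left (hdecay t ht) (Real.rpow_nonneg (by linarith [ht.2]) _)
    _ = q * ((-t) ^ p * V t) := by ring

theorem integral_neg_rpow_mul_le_of_decay (hp : -1 < p) (hρ : 0 ≤ ρ) {c q : ℝ} (hc : 1 ≤ c)
    (hq : q < c ^ (p + 1)) (hV : Measurable V) (hVK : ∀ t ∈ Ioo (-ρ) 0, |V t| ≤ K)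
    (hdecay : ∀ t ∈ Ioo (-ρ) 0, V (t / c) ≤ q * V t) :
    ∫ t in -ρ..0, (-t) ^ p * V t
      ≤ K * ρ ^ (p + 1) * (c ^ (p + 1) - 1) / ((p + 1) * (c ^ (p + 1) - q)) := by
  set I := ∫ t in -ρ..0, (-t) ^ p * V t
  set L := c ^ (p + 1)
  have hc0 : 0 < c := by linarith
  have hL : 0 < L := Real.rpow_pos_of_pos hc0 _
  have hmid : -ρ / c ∈ Icc (-ρ) 0 :=
    ⟨by rw [le_div_iff₀ hc0]; nlinarith, div_nonpos_of_nonpos_of_nonneg (by linarith) hc0.le⟩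
  have hmid' : -ρ / c ∈ uIcc (-ρ) 0 := by rwa [uIcc_of_le (by linarith)]
  have hf := intervalIntegrable_neg_rpow_mul hp hρ hV.aestronglyMeasurable hVK
  have hsplit : I = (∫ t in -ρ..-ρ / c, (-t) ^ p * V t) + ∫ t in -ρ / c..0, (-t) ^ p * V t :=
    (integral_add_adjacent_intervals (hf.mono_set (uIcc_subset_uIcc_left hmid'))
      (hf.mono_set (uIcc_subset_uIcc_right hmid'))).symm
  have hbase :
      ∫ t in -ρ..-ρ / c, (-t) ^ p * V t ≤ K * (ρ ^ (p + 1) - ρ ^ (p + 1) / L) / (p + 1) := by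
    refine (integral_neg_rpow_mul_le hp hmid.1 hmid.2 (hf.mono_set (uIcc_subset_uIcc_left hmid'))
      fun t ht => (le_abs_self _).trans (hVK t ⟨ht.1, ht.2.trans_le hmid.2⟩)).trans_eq ?_
    rw [neg_neg, neg_div, neg_neg, Real.div_rpow hρ hc0.le]
  have hscaled := rpow_mul_integral_neg_rpow_mul_le_of_decay hp hρ hc hV hVK hdecay
  have hI : (L - q) * I ≤ K * ρ ^ (p + 1) * (L - 1) / (p + 1) := by
    have h := mul_le_mul_of_nonneg_left hbase hL.le
    have hK : L * (K * (ρ ^ (p + 1) - ρ ^ (p + 1) / L) / (p + 1))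
        = K * ρ ^ (p + 1) * (L - 1) / (p + 1) := by field_simp
    have hLI : L * I = L * (∫ t in -ρ..-ρ / c, (-t) ^ p * V t)
        + c ^ (p + 1) * ∫ t in -ρ / c..0, (-t) ^ p * V t := by rw [hsplit]; ring
    linarith
  rw [le_div_iff₀ (by nlinarith [hq] : 0 < (p + 1) * (L - q))]
  rw [le_div_iff₀ (by linarith)] at hI
  linarith

end WeightedIntegral

/-- If `V : (-1,0) → [0,∞)` is measurable, nondecreasing in `t`, and satisfies the
epiperimetric-type decay `V(t/e) ≤ (1-ξ) V(t)`, then for `η = ξ/(e^{5/2}+ξ-1)` and every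
`0 < r < 1`, `∫_{-r²}^0 (-t)^{3/2} V(t) dt ≤ ((1-η)/(5/2)) r⁵ V(-r²)`. -/
theorem stmt_9 (ξ η : ℝ) (hξ0 : 0 < ξ) (hξ1 : ξ < 1)
    (hη : η = ξ / (Real.exp (5 / 2) + ξ - 1))
    (V : ℝ → ℝ) (hVmeas : Measurable V)
    (hVnonneg : ∀ t ∈ Set.Ioo (-1 : ℝ) 0, 0 ≤ V t)
    (hVmono : ∀ s ∈ Set.Ioo (-1 : ℝ) 0, ∀ t ∈ Set.Ioo (-1 : ℝ) 0, s ≤ t → V s ≤ V t)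
    (hdecay : ∀ t ∈ Set.Ioo (-1 : ℝ) 0, V (t / Real.exp 1) ≤ (1 - ξ) * V t) :
    ∀ r : ℝ, 0 < r → r < 1 →
      (∫ t in Set.Ioo (-r ^ 2) (0 : ℝ), (-t) ^ ((3 : ℝ) / 2) * V t)
        ≤ (1 - η) / (5 / 2) * r ^ 5 * V (-r ^ 2) := by
  intro r hr0 hr1
  have hr : -r ^ 2 ∈ Ioo (-1 : ℝ) 0 := ⟨by nlinarith, by nlinarith⟩
  have hsub : Ioo (-r ^ 2) 0 ⊆ Ioo (-1 : ℝ) 0 := Ioo_subset_Ioo_left hr.1.le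
  have hbound : ∀ t ∈ Ioo (-r ^ 2) 0, |V t| ≤ V (-r ^ 2) := fun t ht => by
    rw [abs_of_nonneg (hVnonneg t (hsub ht))]
    exact le_of_monotoneOn_of_decay (Real.one_lt_exp_iff.mpr one_pos) (by linarith)
      (by linarith) hVmono hdecay hr (hVnonneg _ hr) ht
  have hexp : Real.exp 1 ^ ((3 : ℝ) / 2 + 1) = Real.exp (5 / 2) := by
    rw [Real.exp_one_rpow]; norm_num
  have hr5 : (r ^ 2) ^ ((3 : ℝ) / 2 + 1) = r ^ 5 := by
    rw [← Real.rpow_natCast_mul hr0.le]; norm_num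
  have hmain := integral_neg_rpow_mul_le_of_decay (p := 3 / 2) (by norm_num) (sq_nonneg r)
    (Real.one_le_exp zero_le_one) (by rw [hexp]; linarith [Real.add_one_le_exp (5 / 2 : ℝ)])
    hVmeas hbound fun t ht => hdecay t (hsub ht)
  rw [hexp, hr5] at hmain
  rw [← integral_Ioc_eq_integral_Ioo, ← intervalIntegral.integral_of_le (by nlinarith)]
  refine hmain.trans_eq ?_
  have hE : 0 < Real.exp (5 / 2) + ξ - 1 := by linarith [Real.add_one_le_exp (5 / 2 : ℝ)]
  rw [hη, sub_sub_eq_add_sub, one_sub_div hE.ne']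
  field_simp
  ring
end
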